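/- Let G = (V,E) be a finite undirected multigraph, A, B ⊆ V², S ⊆ E, and e ∈ E \ S, and let 𝒱 = Four_{G,S}(A,B)/cyc be the set of (A,B)-valid cycle classes with solid edge set S. Then every 𝒱-block is e-adjacent to at most one other 𝒱-block; consequently, in the graph on 𝒱 whose edges join e-adjacent classes, every e-acyclic class has degree at most 1 and every e-cyclic class has degree at most 2. -/

import Mathlib

namespace SubgraphsVsOrientations

/-- The four possible configurations of an edge in a fourientation:
`zero` = 0-way, `forward`/`backward` = the two 1-way configurations (relative to
a reference direction of the edge), `two` = 2-way. -/
inductive Four : Type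
  | zero | forward | backward | two
deriving DecidableEq

instance instFintypeFour : Fintype Four :=
  ⟨{Four.zero, Four.forward, Four.backward, Four.two}, fun x => by cases x <;> simp⟩

variable {V E : Type*}

/-- Whether configuration `c` allows traversal of the edge in direction `b`
(`b = true` means from `src` to `tgt`). -/
def allows : Four → Bool → Prop
  | Four.zero, _ => False
  | Four.forward, b => b = true
  | Four.backward, b => b = false
  | Four.two, _ => True

/-- An edge configuration is solid if it is 0-way or 2-way. -/
def IsSolid (c : Four) : Prop := c = Four.zero ∨ c = Four.two

/-- A configuration is 1-way if it is `forward` or `backward`. -/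
def IsOneWay (c : Four) : Prop := c = Four.forward ∨ c = Four.backward

/-- Reversing a configuration: swaps the two 1-way configurations,
fixes 0-way and 2-way. -/
def flipFour : Four → Four
  | Four.forward => Four.backward
  | Four.backward => Four.forward
  | c => c

/-- The 1-way configuration corresponding to direction `b`. -/
def oneWayFour (b : Bool) : Four := if b then Four.forward else Four.backward

/-- Tail of the arc `(e, b)` (the edge `e` traversed in direction `b`). -/
def arcTail (src tgt : E → V) (a : E × Bool) : V := if a.2 then src a.1 else tgt a.1

/-- Head of the arc `(e, b)`. -/
def arcHead (src tgt : E → V) (a : E × Bool) : V := if a.2 then tgt a.1 else src a.1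

/-- One-step relation of the digraph `G⃗(A,B;φ)`: there is an arc from `x` to `y`, either
a traversable directed edge of the fourientation `φ`, or an extra arc from `A ∪ B`. -/
def arcStep (src tgt : E → V) (A B : Set (V × V)) (φ : E → Four) (x y : V) : Prop :=
  (∃ a : E × Bool, allows (φ a.1) a.2 ∧ arcTail src tgt a = x ∧ arcHead src tgt a = y)
    ∨ (x, y) ∈ A ∪ B

/-- Reachability by a directed path in the digraph `G⃗(A,B;φ)`. -/
def reach (src tgt : E → V) (A B : Set (V × V)) (φ : E → Four) : V → V → Prop :=
  Relation.ReflTransGen (arcStep src tgt A B φ)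

/-- A fourientation `φ` is `(A,B)`-valid: in `G⃗(A,B;φ)`, for every `(u,v) ∈ A` the vertex `v`
cannot reach `u`, and for every `(u,v) ∈ B` the vertex `v` can reach `u`. -/
def IsValid (src tgt : E → V) (A B : Set (V × V)) (φ : E → Four) : Prop :=
  (∀ p ∈ A, ¬ reach src tgt A B φ p.2 p.1) ∧ (∀ p ∈ B, reach src tgt A B φ p.2 p.1)

/-- The set of solid edges of a fourientation. -/
def solidSet (φ : E → Four) : Set E := {e | IsSolid (φ e)}

/-- The fourientation associated to an orientation `σ : E → Bool` (every edge 1-way). -/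
def toFour (σ : E → Bool) : E → Four := fun e => oneWayFour (σ e)

open Classical in
/-- The fourientation associated to a (spanning) subgraph `F ⊆ E`: edges of `F` are 2-way,
the other edges are 0-way. -/
noncomputable def toFourSub (F : Set E) : E → Four :=
  fun e => if e ∈ F then Four.two else Four.zero

/-- The arc `(e,b)` is the arc of a 1-way edge of `φ`. -/
def oneWayArc (φ : E → Four) (a : E × Bool) : Prop := φ a.1 = oneWayFour a.2

/-- `Cyc(φ)`: the set of cyclic 1-way edges (arcs) of the fourientation `φ`, in the digraph
`G⃗(A,B;φ)`: the head of the arc can reach its tail. -/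
def CycSet (src tgt : E → V) (A B : Set (V × V)) (φ : E → Four) : Set (E × Bool) :=
  {a | oneWayArc φ a ∧ reach src tgt A B φ (arcHead src tgt a) (arcTail src tgt a)}

/-- `Acy(φ)`: the set of acyclic 1-way edges (arcs) of the fourientation `φ`. -/
def AcySet (src tgt : E → V) (A B : Set (V × V)) (φ : E → Four) : Set (E × Bool) :=
  {a | oneWayArc φ a ∧ ¬ reach src tgt A B φ (arcHead src tgt a) (arcTail src tgt a)}

/-- `l` is (the arc sequence of) a directed cycle: a nonempty closed chain of arcs
visiting no vertex twice. -/
def IsDirCycle (src tgt : E → V) (l : List (E × Bool)) : Prop :=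
  ∃ h : l ≠ [],
    l.Chain' (fun a b => arcHead src tgt a = arcTail src tgt b) ∧
    arcHead src tgt (l.getLast h) = arcTail src tgt (l.head h) ∧
    (l.map (arcTail src tgt)).Nodup

/-- Reversing the directed cycle `l` in the fourientation `φ`: all 1-way edges on the cycle are
reversed, other edges (in particular 2-way edges of the cycle) are unchanged. -/
def revCyc [DecidableEq E] (φ : E → Four) (l : List (E × Bool)) : E → Four :=
  fun e => if (e, true) ∈ l ∨ (e, false) ∈ l then flipFour (φ e) else φ e

/-- One cycle-reversal move: `ψ` is obtained from `φ` by reversing a directed cycle of `φ`. -/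
def CycleStep (src tgt : E → V) [DecidableEq E] (φ ψ : E → Four) : Prop :=
  ∃ l, IsDirCycle src tgt l ∧ (∀ a ∈ l, allows (φ a.1) a.2) ∧ ψ = revCyc φ l

/-- The edge `e` crosses the cut given by `V1` (in either direction). -/
def edgeCrosses (src tgt : E → V) (V1 : Set V) (e : E) : Prop :=
  (src e ∈ V1 ∧ tgt e ∉ V1) ∨ (tgt e ∈ V1 ∧ src e ∉ V1)

/-- The cut `V1 / V1ᶜ` defines a directed `(A,B)`-cocycle of `G⃗(A,B;φ)`: the set of arcs from
`V1` to `V1ᶜ` is nonempty, no arc of the digraph goes from `V1ᶜ` to `V1`, and no arc of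
`A ∪ B` crosses the cut (in either direction). -/
def IsABCocycleCut (src tgt : E → V) (A B : Set (V × V)) (φ : E → Four) (V1 : Set V) : Prop :=
  (∃ a : E × Bool, allows (φ a.1) a.2 ∧ arcTail src tgt a ∈ V1 ∧ arcHead src tgt a ∉ V1) ∧
  (∀ a : E × Bool, allows (φ a.1) a.2 → ¬ (arcTail src tgt a ∉ V1 ∧ arcHead src tgt a ∈ V1)) ∧
  (∀ p ∈ A ∪ B, ((p : V × V).1 ∈ V1 ↔ p.2 ∈ V1))

open Classical in
/-- Reversing the directed cocycle given by the cut `V1`: all 1-way edges crossing the cut are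
reversed, other edges (in particular 0-way edges crossing the cut) are unchanged. -/
noncomputable def revCut (src tgt : E → V) (φ : E → Four) (V1 : Set V) : E → Four :=
  fun e => if edgeCrosses src tgt V1 e then flipFour (φ e) else φ e

/-- One cocycle-reversal move: `ψ` is obtained from `φ` by reversing a directed
`(A,B)`-cocycle of `φ`. -/
def CocycleStep (src tgt : E → V) (A B : Set (V × V)) (φ ψ : E → Four) : Prop :=
  ∃ V1 : Set V, IsABCocycleCut src tgt A B φ V1 ∧ ψ = revCut src tgt φ V1

/-- One cycle- or cocycle-reversal move. -/
def CCStep (src tgt : E → V) (A B : Set (V × V)) [DecidableEq E] (φ ψ : E → Four) : Prop :=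
  CycleStep src tgt φ ψ ∨ CocycleStep src tgt A B φ ψ

/-- `φ` contains no cycle (of the graph `G`) made entirely of 2-way edges. -/
def NoTwoWayCycle (src tgt : E → V) (φ : E → Four) : Prop :=
  ¬ ∃ l : List (E × Bool), IsDirCycle src tgt l ∧ (l.map Prod.fst).Nodup ∧
      ∀ a ∈ l, φ a.1 = Four.two

/-- `φ` contains no `(A,B)`-cocycle (of the graph `G`) made entirely of 0-way edges:
there is no cut, not crossed by any arc of `A ∪ B`, crossed by at least one edge of `G`,
all of whose crossing edges are 0-way. -/
def NoZeroWayCocycle (src tgt : E → V) (A B : Set (V × V)) (φ : E → Four) : Prop :=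
  ¬ ∃ V1 : Set V, (∃ e, edgeCrosses src tgt V1 e) ∧
      (∀ e, edgeCrosses src tgt V1 e → φ e = Four.zero) ∧
      (∀ p ∈ A ∪ B, ((p : V × V).1 ∈ V1 ↔ p.2 ∈ V1))

/-- The subgraph `F` contains no cycle (it is a forest). -/
def NoCycleIn (src tgt : E → V) (F : Set E) : Prop :=
  ¬ ∃ l : List (E × Bool), IsDirCycle src tgt l ∧ (l.map Prod.fst).Nodup ∧ ∀ a ∈ l, a.1 ∈ F

/-- One undirected adjacency step in the graph `F ∪ A̲ ∪ B̲`. -/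
def usym (src tgt : E → V) (A B : Set (V × V)) (F : Set E) (x y : V) : Prop :=
  (∃ e ∈ F, (src e = x ∧ tgt e = y) ∨ (src e = y ∧ tgt e = x)) ∨
  (∃ p ∈ A ∪ B, ((p : V × V) = (x, y) ∨ p = (y, x)))

/-- Connectivity (by undirected paths) in the graph `F ∪ A̲ ∪ B̲`. -/
def ureach (src tgt : E → V) (A B : Set (V × V)) (F : Set E) : V → V → Prop :=
  Relation.ReflTransGen (usym src tgt A B F)

/-- The subgraph `F` is `(A,B)`-connected: the connected components of `F ∪ A̲ ∪ B̲`
coincide with those of `G ∪ A̲ ∪ B̲`. -/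
def ABConnected (src tgt : E → V) (A B : Set (V × V)) (F : Set E) : Prop :=
  ∀ x y, ureach src tgt A B F x y ↔ ureach src tgt A B Set.univ x y


/-- Membership in `𝒱`: `φ` is `(A,B)`-valid, has solid edge set `S`, and its class contains no
cycle made entirely of 2-way edges. -/
def InVclass (src tgt : E → V) (A B : Set (V × V)) (S : Set E) [DecidableEq E]
    (φ : E → Four) : Prop :=
  IsValid src tgt A B φ ∧ solidSet φ = S ∧ NoTwoWayCycle src tgt φ

/-- The cycle equivalence class of `φ` (for the equivalence generated by cycle reversals). -/
def cycCls (src tgt : E → V) [DecidableEq E] (φ : E → Four) : Set (E → Four) :=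
  {ψ | Relation.EqvGen (CycleStep src tgt) φ ψ}

/-- `C` is a class of `𝒱` (viewed as a set of fourientations). -/
def IsVClass (src tgt : E → V) (A B : Set (V × V)) (S : Set E) [DecidableEq E]
    (C : Set (E → Four)) : Prop :=
  ∃ φ, InVclass src tgt A B S φ ∧ C = cycCls src tgt φ

/-- `X` is a `𝒱`-block: a nonempty set of the form `φ̄_{→e}` or `φ̄_{←e}` for a class
`φ̄` of `𝒱`. -/
def IsVBlock (src tgt : E → V) (A B : Set (V × V)) (S : Set E) (e : E) [DecidableEq E]
    (X : Set (E → Four)) : Prop :=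
  ∃ φ b, InVclass src tgt A B S φ ∧
    X = {ψ ∈ cycCls src tgt φ | ψ e = oneWayFour b} ∧ X.Nonempty

/-- Two sets of fourientations are `e`-adjacent if they contain fourientations which coincide
except that they have opposite orientations of `e`. -/
def EAdj (e : E) [DecidableEq E] (X Y : Set (E → Four)) : Prop :=
  ∃ ψ ∈ X, Function.update ψ e (flipFour (ψ e)) ∈ Y

/-- The edge `e` (1-way in `ψ`) is cyclic in `G⃗(A,B;ψ)`. -/
def ECyclicIn (src tgt : E → V) (A B : Set (V × V)) (e : E) (ψ : E → Four) : Prop :=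
  (ψ e = Four.forward ∧ reach src tgt A B ψ (tgt e) (src e)) ∨
  (ψ e = Four.backward ∧ reach src tgt A B ψ (src e) (tgt e))

/-- The edge `e` (1-way in `ψ`) is acyclic in `G⃗(A,B;ψ)`. -/
def EAcyclicIn (src tgt : E → V) (A B : Set (V × V)) (e : E) (ψ : E → Four) : Prop :=
  (ψ e = Four.forward ∧ ¬ reach src tgt A B ψ (tgt e) (src e)) ∨
  (ψ e = Four.backward ∧ ¬ reach src tgt A B ψ (src e) (tgt e))


/-!
Two cycle-equivalent fourientations `χ`, `ψ` differ by reversing the support of an integer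
circulation `c` conformal to `χ`: it vanishes on 0-way edges, is `0` or follows the direction
of each 1-way edge, and is arbitrary on 2-way edges, which reversal leaves unchanged. If `χ` and
`ψ` agree on the 1-way edge `e` then `c e = 0`, and peeling off directed cycles in the support
of `c` turns the equivalence into a sequence of cycle reversals avoiding `e`. Such reversals
commute with flipping `e`, so flipping `e` sends all fourientations of a class with a given
orientation of `e` into a single class. A block is therefore adjacent to at most one block, and
a class to at most one class per orientation of `e`. In an `e`-acyclic class no reversed cycle
passes through `e`, so `e` has only one orientation there.
-/

lemma _root_.Function.exists_nodup_isChain_of_finite {α : Type*} [Finite α] [Nonempty α]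
    (g : α → α) :
    ∃ l : List α, ∃ h : l ≠ [], l.Nodup ∧ l.IsChain (fun x y => g x = y) ∧
      g (l.getLast h) = l.head h := by
  obtain ⟨x₀⟩ := ‹Nonempty α›
  obtain ⟨m, n, hmn, heq⟩ := Finite.exists_ne_map_eq_of_infinite (fun k => g^[k] x₀)
  wlog hlt : m < n generalizing m n
  · exact this n m hmn.symm heq.symm (by omega)
  have hper : Function.IsPeriodicPt g (n - m) (g^[m] x₀) := by
    simp only [Function.IsPeriodicPt, Function.IsFixedPt, ← Function.iterate_add_apply,
      Nat.sub_add_cancel hlt.le]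
    exact heq.symm
  set x := g^[m] x₀
  have hpos : 0 < Function.minimalPeriod g x := hper.minimalPeriod_pos (by omega)
  refine ⟨(List.range (Function.minimalPeriod g x)).map (g^[·] x), by simp; omega,
    Cycle.nodup_coe_iff.mp Function.nodup_periodicOrbit, ?_, ?_⟩
  · rw [List.isChain_map, List.isChain_range]
    exact fun k _ => (Function.iterate_succ_apply' g k x).symm
  · rw [List.getLast_map, List.head_map, List.getLast_range, List.head_range,
      ← Function.iterate_succ_apply' g, Nat.succ_eq_add_one, Nat.sub_add_cancel hpos,
      Function.iterate_minimalPeriod, Function.iterate_zero_apply]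

lemma _root_.Relation.EqvGen.apply_eq_of_forall {α β : Type*} {r : α → α → Prop} {g : α → β}
    {a b : α} (h : Relation.EqvGen r a b)
    (hg : ∀ x y, Relation.EqvGen r a x → r x y → g x = g y) : g a = g b := by
  suffices ∀ x y, Relation.EqvGen r x y → Relation.EqvGen r a x → g x = g y from
    this a b h (.refl a)
  intro x y hxy
  induction hxy with
  | rel x y hxy => exact fun hx => hg x y hx hxy
  | refl => exact fun _ => rfl
  | symm x y hxy ih => exact fun hy => (ih (hy.trans _ _ _ (hxy.symm _ _))).symm
  | trans x y z hxy _ ih₁ ih₂ => exact fun hx => (ih₁ hx).trans (ih₂ (hx.trans _ _ _ hxy))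

lemma _root_.Set.Subsingleton.ncard_le_one {α : Type*} {s : Set α} (hs : s.Subsingleton) :
    s.ncard ≤ 1 := by
  rcases hs.eq_empty_or_singleton with rfl | ⟨a, rfl⟩ <;> simp

lemma oneWayFour_ne_two (b : Bool) : oneWayFour b ≠ Four.two := by
  cases b <;> simp [oneWayFour]

lemma flipFour_ne_two {x : Four} (hx : x ≠ Four.two) : flipFour x ≠ Four.two := by
  cases x <;> simp_all [flipFour]

namespace Four

lemma flipFour_flipFour (x : Four) : flipFour (flipFour x) = x := by cases x <;> rfl

def CarriesFlow : Four → ℤ → Prop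
  | zero, t => t = 0
  | forward, t => t = 0 ∨ t = 1
  | backward, t => t = 0 ∨ t = -1
  | two, _ => True

def reverseIf (t : ℤ) (x : Four) : Four := if t = 0 then x else flipFour x

lemma reverseIf_eq_or (t : ℤ) (x : Four) : x.reverseIf t = x ∨ x.reverseIf t = flipFour x := by
  unfold reverseIf; split_ifs <;> simp

lemma reverseIf_reverseIf_neg (t : ℤ) (x : Four) : (x.reverseIf t).reverseIf (-t) = x := by
  by_cases ht : t = 0 <;> simp [reverseIf, ht, flipFour_flipFour]

lemma CarriesFlow.reverseIf_neg {x : Four} {t : ℤ} (h : x.CarriesFlow t) :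
    (x.reverseIf t).CarriesFlow (-t) := by
  cases x <;> simp only [CarriesFlow, reverseIf] at * <;> split_ifs <;> simp_all [flipFour]

lemma CarriesFlow.add {x : Four} {s t : ℤ} (hs : x.CarriesFlow s)
    (ht : (x.reverseIf s).CarriesFlow t) : x.CarriesFlow (s + t) := by
  cases x <;> simp only [CarriesFlow, reverseIf] at * <;> split_ifs at * <;>
    simp_all [flipFour] <;> omega

lemma reverseIf_add {x : Four} {s t : ℤ} (hs : x.CarriesFlow s)
    (ht : (x.reverseIf s).CarriesFlow t) : x.reverseIf (s + t) = (x.reverseIf s).reverseIf t := by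
  cases x <;> simp only [CarriesFlow, reverseIf] at * <;> split_ifs at * <;> simp_all [flipFour]

lemma CarriesFlow.sub {x : Four} {s t : ℤ} (ht : x.CarriesFlow t) (hs : x.CarriesFlow s) :
    (x.reverseIf s).CarriesFlow (t - s) := by
  cases x <;> simp only [CarriesFlow, reverseIf] at * <;> split_ifs <;>
    simp_all [flipFour] <;> omega

lemma CarriesFlow.eq_zero_of_reverseIf_eq {x : Four} {t : ℤ} (h : x.CarriesFlow t)
    (hx : x ≠ two) (hrev : x.reverseIf t = x) : t = 0 := by
  by_contra ht
  cases x <;> simp_all [CarriesFlow, reverseIf, flipFour]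

lemma carriesFlow_sub_of_allows {x : Four} {p q : ℕ} (hp : p ≤ 1) (hq : q ≤ 1)
    (htrue : 0 < p → allows x true) (hfalse : 0 < q → allows x false) :
    x.CarriesFlow (p - q) := by
  cases x <;> simp only [CarriesFlow, allows, Bool.false_eq_true, Bool.true_eq_false,
    imp_false, not_lt] at htrue hfalse ⊢ <;> omega

lemma reverseIf_sub_of_allows {x : Four} {p q : ℕ} (htrue : 0 < p → allows x true)
    (hfalse : 0 < q → allows x false) :
    x.reverseIf (p - q) = if 0 < p ∨ 0 < q then flipFour x else x := by
  cases x <;> simp only [reverseIf, allows] at htrue hfalse ⊢ <;> split_ifs <;>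
    simp_all [flipFour]

end Four

def arcSign (b : Bool) : ℤ := if b then 1 else -1

def arcFlow (c : E → ℤ) (a : E × Bool) : ℤ := arcSign a.2 * c a.1

lemma arcFlow_not (c : E → ℤ) (a : E × Bool) : arcFlow c (a.1, !a.2) = -arcFlow c a := by
  obtain ⟨f, b⟩ := a
  cases b <;> simp [arcFlow, arcSign]

lemma arcTail_not (src tgt : E → V) (a : E × Bool) :
    arcTail src tgt (a.1, !a.2) = arcHead src tgt a := by
  obtain ⟨f, b⟩ := a
  cases b <;> simp [arcTail, arcHead]

def Conformal (c : E → ℤ) (χ : E → Four) : Prop := ∀ f, (χ f).CarriesFlow (c f)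

def reverseAlong (c : E → ℤ) (χ : E → Four) : E → Four := fun f => (χ f).reverseIf (c f)

section Conformal

variable {c d : E → ℤ} {χ : E → Four}

lemma conformal_zero (χ : E → Four) : Conformal 0 χ := fun f => by
  cases χ f <;> simp [Four.CarriesFlow]

lemma reverseAlong_zero (χ : E → Four) : reverseAlong 0 χ = χ := by
  funext f
  simp [reverseAlong, Four.reverseIf]

lemma Conformal.neg (h : Conformal c χ) : Conformal (-c) (reverseAlong c χ) :=
  fun f => (h f).reverseIf_neg

lemma reverseAlong_neg (c : E → ℤ) (χ : E → Four) :
    reverseAlong (-c) (reverseAlong c χ) = χ :=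
  funext fun _ => Four.reverseIf_reverseIf_neg _ _

lemma Conformal.add (hc : Conformal c χ) (hd : Conformal d (reverseAlong c χ)) :
    Conformal (c + d) χ :=
  fun f => (hc f).add (hd f)

lemma reverseAlong_add (hc : Conformal c χ) (hd : Conformal d (reverseAlong c χ)) :
    reverseAlong (c + d) χ = reverseAlong d (reverseAlong c χ) :=
  funext fun f => Four.reverseIf_add (hc f) (hd f)

lemma Conformal.sub (hc : Conformal c χ) (hd : Conformal d χ) :
    Conformal (c - d) (reverseAlong d χ) :=
  fun f => (hc f).sub (hd f)

lemma Conformal.allows_of_arcFlow_pos (h : Conformal c χ) {a : E × Bool}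
    (ha : 0 < arcFlow c a) : allows (χ a.1) a.2 := by
  have := h a.1
  obtain ⟨f, b⟩ := a
  cases hf : χ f <;> cases b <;> simp_all [Four.CarriesFlow, allows, arcFlow, arcSign] <;> omega

end Conformal

section Circulation

variable (src tgt : E → V) [Fintype E]

open Classical in
noncomputable def netInflow (v : V) : (E → ℤ) →+ ℤ where
  toFun c := ∑ a : E × Bool, if arcHead src tgt a = v then arcFlow c a else 0
  map_zero' := by simp [arcFlow]
  map_add' c d := by
    simp only [← Finset.sum_add_distrib]
    refine Finset.sum_congr rfl fun a _ => ?_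
    split_ifs <;> simp [arcFlow, mul_add]

noncomputable def circulations : AddSubgroup (E → ℤ) := ⨅ v : V, (netInflow src tgt v).ker

variable {src tgt}

lemma mem_circulations {c : E → ℤ} :
    c ∈ circulations src tgt ↔ ∀ v, netInflow src tgt v c = 0 := by
  simp [circulations, AddSubgroup.mem_iInf, AddMonoidHom.mem_ker]

lemma exists_arcFlow_pos_arcTail_eq {c : E → ℤ} (hc : c ∈ circulations src tgt)
    {a : E × Bool} (ha : 0 < arcFlow c a) :
    ∃ a', 0 < arcFlow c a' ∧ arcTail src tgt a' = arcHead src tgt a := by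
  classical
  by_contra! hout
  have hnonneg : ∀ a' : E × Bool,
      0 ≤ if arcHead src tgt a' = arcHead src tgt a then arcFlow c a' else 0 := by
    intro a'
    split_ifs with hhead
    · by_contra! hneg
      exact hout (a'.1, !a'.2) (by rw [arcFlow_not]; omega) (by rw [arcTail_not, hhead])
    · rfl
  have hpos := Finset.sum_pos' (fun a' _ => hnonneg a') ⟨a, Finset.mem_univ _, by simpa⟩
  exact hpos.ne' (mem_circulations.mp hc (arcHead src tgt a))

/-- The successor arc is chosen as a function of the vertex only, so that the first repeated
vertex along the walk closes a cycle through distinct vertices. -/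
lemma exists_isDirCycle_arcFlow_pos {c : E → ℤ} (hc : c ∈ circulations src tgt) (hc0 : c ≠ 0) :
    ∃ l, IsDirCycle src tgt l ∧ ∀ a ∈ l, 0 < arcFlow c a := by
  obtain ⟨f, hf⟩ : ∃ f, c f ≠ 0 := by
    by_contra! h
    exact hc0 (funext h)
  set H : Set V := arcHead src tgt '' {a | 0 < arcFlow c a}
  have : Finite H := ((Set.toFinite _).image _).to_subtype
  have : Nonempty H := by
    rcases hf.lt_or_gt with hneg | hpos
    · exact ⟨_, (f, false), by simpa [arcFlow, arcSign] using hneg, rfl⟩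
    · exact ⟨_, (f, true), by simpa [arcFlow, arcSign] using hpos, rfl⟩
  have hout : ∀ v : H, ∃ a, 0 < arcFlow c a ∧ arcTail src tgt a = v := by
    rintro ⟨_, a, ha, rfl⟩
    exact exists_arcFlow_pos_arcTail_eq hc ha
  choose out hout_pos hout_tail using hout
  obtain ⟨vs, hvs, hnodup, hchain, hclose⟩ :=
    Function.exists_nodup_isChain_of_finite fun v : H => ⟨_, out v, hout_pos v, rfl⟩
  refine ⟨vs.map out, ⟨by simpa using hvs, ?_, ?_, ?_⟩,
    List.forall_mem_map.mpr fun v _ => hout_pos v⟩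
  · refine (List.isChain_map out).mpr (hchain.imp fun v w hvw => ?_)
    rw [hout_tail, ← hvw]
  · rw [List.getLast_map, List.head_map, hout_tail, ← hclose]
  · rw [List.map_map, show arcTail src tgt ∘ out = Subtype.val from funext hout_tail]
    exact hnodup.map Subtype.val_injective

end Circulation

section CycleVec

variable {src tgt : E → V} {l : List (E × Bool)}

lemma IsDirCycle.nodup (hl : IsDirCycle src tgt l) : l.Nodup :=
  List.Nodup.of_map _ hl.2.2.2

lemma map_arcHead_of_isChain {a : E × Bool} {t : List (E × Bool)}
    (h : (a :: t).IsChain fun x y => arcHead src tgt x = arcTail src tgt y) :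
    (a :: t).map (arcHead src tgt) =
      t.map (arcTail src tgt) ++ [arcHead src tgt ((a :: t).getLast (List.cons_ne_nil a t))] := by
  induction t generalizing a with
  | nil => rfl
  | cons b t ih =>
    rw [List.isChain_cons_cons] at h
    rw [List.map_cons, ih h.2, List.getLast_cons_cons, h.1]
    rfl

lemma IsDirCycle.perm_map_arcHead (hl : IsDirCycle src tgt l) :
    (l.map (arcHead src tgt)).Perm (l.map (arcTail src tgt)) := by
  obtain ⟨hne, hchain, hclose, -⟩ := hl
  obtain ⟨a, t, rfl⟩ := List.exists_cons_of_ne_nil hne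
  rw [map_arcHead_of_isChain hchain, hclose]
  exact List.perm_append_singleton _ _

variable [DecidableEq E]

def cycleVec (l : List (E × Bool)) : E → ℤ := (l.map fun a => Pi.single a.1 (arcSign a.2)).sum

lemma cycleVec_apply (l : List (E × Bool)) (f : E) :
    cycleVec l f = l.count (f, true) - l.count (f, false) := by
  induction l with
  | nil => simp [cycleVec]
  | cons a l ih =>
    obtain ⟨g, b⟩ := a
    simp only [cycleVec, List.map_cons, List.sum_cons, Pi.add_apply] at ih ⊢
    rw [ih, List.count_cons, List.count_cons]
    by_cases hg : f = g <;> cases b <;> simp [hg, arcSign, eq_comm (a := g)] <;> ring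

lemma cycleVec_apply_eq_zero {f : E} (hf : ∀ a ∈ l, a.1 ≠ f) : cycleVec l f = 0 := by
  rw [cycleVec_apply, List.count_eq_zero.mpr fun h => hf _ h rfl,
    List.count_eq_zero.mpr fun h => hf _ h rfl]
  rfl

variable {χ : E → Four}

lemma IsDirCycle.conformal_cycleVec (hl : IsDirCycle src tgt l)
    (htrav : ∀ a ∈ l, allows (χ a.1) a.2) : Conformal (cycleVec l) χ := fun f => by
  rw [cycleVec_apply]
  exact Four.carriesFlow_sub_of_allows (List.nodup_iff_count_le_one.mp hl.nodup _)
    (List.nodup_iff_count_le_one.mp hl.nodup _) (fun h => htrav _ (List.count_pos_iff.mp h))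
    (fun h => htrav _ (List.count_pos_iff.mp h))

lemma reverseAlong_cycleVec (htrav : ∀ a ∈ l, allows (χ a.1) a.2) :
    reverseAlong (cycleVec l) χ = revCyc χ l := by
  funext f
  rw [reverseAlong, cycleVec_apply, Four.reverseIf_sub_of_allows
    (fun h => htrav _ (List.count_pos_iff.mp h)) (fun h => htrav _ (List.count_pos_iff.mp h))]
  simp only [List.count_pos_iff, revCyc]

variable [Fintype E]

open Classical in
lemma netInflow_single (v : V) (a : E × Bool) :
    netInflow src tgt v (Pi.single a.1 (arcSign a.2)) =
      (if arcHead src tgt a = v then 1 else 0) - (if arcTail src tgt a = v then 1 else 0) := by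
  obtain ⟨g, b⟩ := a
  simp only [netInflow, AddMonoidHom.coe_mk, ZeroHom.coe_mk, Fintype.sum_prod_type]
  rw [Finset.sum_eq_single g (fun f _ hf => by simp [arcFlow, hf]) (by simp)]
  cases b <;> simp [arcFlow, arcSign, arcHead, arcTail] <;> split_ifs <;> norm_num

lemma IsDirCycle.cycleVec_mem_circulations (hl : IsDirCycle src tgt l) :
    cycleVec l ∈ circulations src tgt := by
  classical
  refine mem_circulations.mpr fun v => ?_
  have hperm := congrArg (fun m : Multiset V => (m.map fun w => if w = v then (1 : ℤ) else 0).sum)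
    (Multiset.coe_eq_coe.mpr hl.perm_map_arcHead)
  simp only [cycleVec, map_list_sum, List.map_map, Function.comp_def, netInflow_single]
  rw [← Multiset.sum_coe, ← Multiset.map_coe, Multiset.sum_map_sub, sub_eq_zero]
  simpa [Multiset.map_map, Function.comp_def] using hperm

lemma exists_conformal_circulation_of_eqvGen {ψ : E → Four}
    (h : Relation.EqvGen (CycleStep src tgt) χ ψ) :
    ∃ c ∈ circulations src tgt, Conformal c χ ∧ ψ = reverseAlong c χ := by
  induction h with
  | rel χ ψ hstep =>
    obtain ⟨l, hl, htrav, rfl⟩ := hstep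
    exact ⟨cycleVec l, hl.cycleVec_mem_circulations, hl.conformal_cycleVec htrav,
      (reverseAlong_cycleVec htrav).symm⟩
  | refl χ => exact ⟨0, zero_mem _, conformal_zero χ, (reverseAlong_zero χ).symm⟩
  | symm χ ψ _ ih =>
    obtain ⟨c, hc, hconf, rfl⟩ := ih
    exact ⟨-c, neg_mem hc, hconf.neg, (reverseAlong_neg c χ).symm⟩
  | trans χ ψ ω _ _ ih₁ ih₂ =>
    obtain ⟨c, hc, hconf, rfl⟩ := ih₁
    obtain ⟨d, hd, hdconf, rfl⟩ := ih₂
    exact ⟨c + d, add_mem hc hd, hconf.add hdconf, (reverseAlong_add hconf hdconf).symm⟩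

lemma apply_eq_or_of_mem_cycCls {φ ψ : E → Four} (h : ψ ∈ cycCls src tgt φ) (e : E) :
    ψ e = φ e ∨ ψ e = flipFour (φ e) := by
  obtain ⟨c, -, -, rfl⟩ := exists_conformal_circulation_of_eqvGen h
  exact Four.reverseIf_eq_or _ _

end CycleVec

section Decomposition

variable (src tgt : E → V) [DecidableEq E]

def CycleStepAvoiding (e : E) (χ ψ : E → Four) : Prop :=
  ∃ l, IsDirCycle src tgt l ∧ (∀ a ∈ l, allows (χ a.1) a.2) ∧ (∀ a ∈ l, a.1 ≠ e) ∧
    ψ = revCyc χ l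

def flipAt (e : E) (χ : E → Four) : E → Four := Function.update χ e (flipFour (χ e))

variable {src tgt}

lemma revCyc_apply_of_forall_ne {l : List (E × Bool)} {f : E} (hl : ∀ a ∈ l, a.1 ≠ f)
    (χ : E → Four) : revCyc χ l f = χ f :=
  if_neg fun h => h.elim (hl _ · rfl) (hl _ · rfl)

lemma revCyc_update {l : List (E × Bool)} {e : E} (hl : ∀ a ∈ l, a.1 ≠ e) (χ : E → Four)
    (x : Four) : revCyc (Function.update χ e x) l = Function.update (revCyc χ l) e x := by
  funext f
  by_cases hf : f = e
  · subst hf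
    simp [revCyc_apply_of_forall_ne hl]
  · simp [revCyc, Function.update_of_ne hf]

lemma CycleStepAvoiding.map_flipAt {e : E} {χ ψ : E → Four}
    (h : CycleStepAvoiding src tgt e χ ψ) :
    CycleStepAvoiding src tgt e (flipAt e χ) (flipAt e ψ) := by
  obtain ⟨l, hl, htrav, havoid, rfl⟩ := h
  refine ⟨l, hl, fun a ha => ?_, havoid, ?_⟩
  · rw [flipAt, Function.update_of_ne (havoid a ha)]
    exact htrav a ha
  · rw [flipAt, flipAt, revCyc_update havoid, revCyc_apply_of_forall_ne havoid]

lemma CycleStepAvoiding.cycleStep {e : E} {χ ψ : E → Four}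
    (h : CycleStepAvoiding src tgt e χ ψ) : CycleStep src tgt χ ψ := by
  obtain ⟨l, hl, htrav, -, rfl⟩ := h
  exact ⟨l, hl, htrav, rfl⟩

variable [Fintype E]

lemma sum_natAbs_sub_cycleVec_lt {c : E → ℤ} {l : List (E × Bool)} (hl : IsDirCycle src tgt l)
    (hpos : ∀ a ∈ l, 0 < arcFlow c a) :
    ∑ f, (c f - cycleVec l f).natAbs < ∑ f, (c f).natAbs := by
  have hcount : ∀ f, l.count (f, true) ≤ 1 ∧ l.count (f, false) ≤ 1 ∧
      (0 < l.count (f, true) → 0 < c f) ∧ (0 < l.count (f, false) → c f < 0) := fun f =>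
    ⟨List.nodup_iff_count_le_one.mp hl.nodup _, List.nodup_iff_count_le_one.mp hl.nodup _,
      fun h => by simpa [arcFlow, arcSign] using hpos _ (List.count_pos_iff.mp h),
      fun h => by simpa [arcFlow, arcSign] using hpos _ (List.count_pos_iff.mp h)⟩
  obtain ⟨⟨g, b⟩, hgb⟩ := List.exists_mem_of_ne_nil l hl.1
  refine Finset.sum_lt_sum (fun f _ => ?_) ⟨g, Finset.mem_univ _, ?_⟩
  · have := hcount f
    rw [cycleVec_apply]
    omega
  · have := hcount g
    have hgb' := List.count_pos_iff.mpr hgb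
    rw [cycleVec_apply]
    cases b <;> omega

/-- Conformal decomposition: a directed cycle in the support of `c` avoids `e`, and removing it
from `c` leaves a smaller conformal circulation. -/
theorem reflTransGen_cycleStepAvoiding {e : E} {c : E → ℤ} {χ : E → Four}
    (hc : c ∈ circulations src tgt) (hconf : Conformal c χ) (he : c e = 0) :
    Relation.ReflTransGen (CycleStepAvoiding src tgt e) χ (reverseAlong c χ) := by
  induction hn : ∑ f, (c f).natAbs using Nat.strong_induction_on generalizing c χ with
  | _ n ih =>
  by_cases hc0 : c = 0
  · rw [hc0, reverseAlong_zero]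
  obtain ⟨l, hl, hpos⟩ := exists_isDirCycle_arcFlow_pos hc hc0
  have htrav : ∀ a ∈ l, allows (χ a.1) a.2 := fun a ha => hconf.allows_of_arcFlow_pos (hpos a ha)
  have havoid : ∀ a ∈ l, a.1 ≠ e := fun a ha hae => by
    simpa [arcFlow, hae, he] using hpos a ha
  have hs := hl.conformal_cycleVec htrav
  have hrev := reverseAlong_cycleVec htrav
  have hsplit : reverseAlong c χ = reverseAlong (c - cycleVec l) (revCyc χ l) := by
    rw [← hrev, ← reverseAlong_add hs (hconf.sub hs), add_sub_cancel]
  rw [hsplit]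
  refine .head ⟨l, hl, htrav, havoid, rfl⟩ (ih _ ?_ (sub_mem hc hl.cycleVec_mem_circulations)
    (hrev ▸ hconf.sub hs) ?_ rfl)
  · exact hn ▸ sum_natAbs_sub_cycleVec_lt hl hpos
  · rw [Pi.sub_apply, he, cycleVec_apply_eq_zero havoid, sub_zero]

theorem eqvGen_flipAt {e : E} {χ ψ : E → Four} (h : Relation.EqvGen (CycleStep src tgt) χ ψ)
    (he : χ e = ψ e) (htwo : χ e ≠ Four.two) :
    Relation.EqvGen (CycleStep src tgt) (flipAt e χ) (flipAt e ψ) := by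
  obtain ⟨c, hc, hconf, rfl⟩ := exists_conformal_circulation_of_eqvGen h
  have hce : c e = 0 := (hconf e).eq_zero_of_reverseIf_eq htwo he.symm
  have hflip := (reflTransGen_cycleStepAvoiding hc hconf hce).lift (flipAt e)
    fun _ _ h => h.map_flipAt
  exact Relation.EqvGen.reflTransGen_le_eqvGen (r := CycleStep src tgt) _ _
    (Relation.ReflTransGen.mono (fun _ _ h => CycleStepAvoiding.cycleStep h) _ _ hflip)

end Decomposition

section Reach

variable {src tgt : E → V} (A B : Set (V × V)) {φ : E → Four}

lemma reach_of_allows {a : E × Bool} (h : allows (φ a.1) a.2) :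
    reach src tgt A B φ (arcTail src tgt a) (arcHead src tgt a) :=
  .single (Or.inl ⟨a, h, rfl, rfl⟩)

lemma IsDirCycle.reach_arcHead_arcTail {l : List (E × Bool)} (hl : IsDirCycle src tgt l)
    (htrav : ∀ a ∈ l, allows (φ a.1) a.2) {a : E × Bool} (ha : a ∈ l) :
    reach src tgt A B φ (arcHead src tgt a) (arcTail src tgt a) := by
  obtain ⟨hne, hchain, hclose, -⟩ := hl
  have hchain' : l.IsChain fun x y => arcHead src tgt x = arcTail src tgt y ∧
      allows (φ x.1) x.2 ∧ allows (φ y.1) y.2 :=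
    List.IsChain.imp_of_mem_imp (fun x y hx hy h => ⟨h, htrav x hx, htrav y hy⟩) hchain
  have hto_last : reach src tgt A B φ (arcHead src tgt a) (arcHead src tgt (l.getLast hne)) :=
    hchain'.backwards_induction
      (fun x => reach src tgt A B φ (arcHead src tgt x) (arcHead src tgt (l.getLast hne))) _
      (fun x y ⟨hxy, _, hy⟩ h => hxy ▸ (reach_of_allows A B hy).trans h) (fun _ => .refl) a ha
  have hfrom_head : reach src tgt A B φ (arcTail src tgt (l.head hne)) (arcTail src tgt a) :=
    hchain'.induction
      (fun x => reach src tgt A B φ (arcTail src tgt (l.head hne)) (arcTail src tgt x)) _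
      (fun x y ⟨hxy, hx, _⟩ h => h.trans (hxy ▸ reach_of_allows A B hx)) (fun _ => .refl) a ha
  exact hto_last.trans (hclose ▸ hfrom_head)

variable [DecidableEq E]

lemma revCyc_apply_of_eAcyclicIn {e : E} {l : List (E × Bool)} (hl : IsDirCycle src tgt l)
    (htrav : ∀ a ∈ l, allows (φ a.1) a.2) (hac : EAcyclicIn src tgt A B e φ) :
    revCyc φ l e = φ e := by
  refine revCyc_apply_of_forall_ne (fun a ha hae => ?_) φ
  obtain ⟨f, b⟩ := a
  obtain rfl : f = e := hae
  have hcyc := hl.reach_arcHead_arcTail A B htrav ha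
  have hallow := htrav _ ha
  rcases hac with ⟨he, hnr⟩ | ⟨he, hnr⟩ <;> cases b <;> simp_all [allows, arcHead, arcTail]

lemma apply_eq_of_forall_eAcyclicIn {e : E}
    (hac : ∀ ψ ∈ cycCls src tgt φ, EAcyclicIn src tgt A B e ψ) {ψ : E → Four}
    (hψ : ψ ∈ cycCls src tgt φ) : ψ e = φ e :=
  (Relation.EqvGen.apply_eq_of_forall (g := fun χ => χ e) hψ fun χ _ hχ ⟨_, hl, htrav, hχ'⟩ =>
    hχ' ▸ (revCyc_apply_of_eAcyclicIn A B hl htrav (hac χ hχ)).symm).symm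

end Reach

section Classes

variable {src tgt : E → V} [DecidableEq E]

lemma cycCls_eq_of_mem {φ ψ : E → Four} (h : ψ ∈ cycCls src tgt φ) :
    cycCls src tgt φ = cycCls src tgt ψ := by
  ext χ
  exact ⟨fun hχ => (h.symm _ _).trans _ _ _ hχ, fun hχ => h.trans _ _ _ hχ⟩

variable (src tgt) in
def flipClasses (e : E) (C : Set (E → Four)) (x : Four) : Set (Set (E → Four)) :=
  (fun ψ => cycCls src tgt (flipAt e ψ)) '' {ψ ∈ C | ψ e = x}

lemma mem_flipClasses {A B : Set (V × V)} {S : Set E} {e : E} {C C' : Set (E → Four)}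
    (hC' : IsVClass src tgt A B S C') {ψ : E → Four} (hψ : ψ ∈ C) (hflip : flipAt e ψ ∈ C') :
    C' ∈ flipClasses src tgt e C (ψ e) := by
  obtain ⟨φ', -, rfl⟩ := hC'
  exact ⟨ψ, ⟨hψ, rfl⟩, (cycCls_eq_of_mem hflip).symm⟩

variable [Fintype E]

variable (src tgt) in
lemma flipClasses_subsingleton (e : E) (φ : E → Four) {x : Four} (hx : x ≠ Four.two) :
    (flipClasses src tgt e (cycCls src tgt φ) x).Subsingleton := by
  rintro _ ⟨ψ, ⟨hψ, hψe⟩, rfl⟩ _ ⟨ψ', ⟨hψ', hψ'e⟩, rfl⟩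
  exact cycCls_eq_of_mem
    (eqvGen_flipAt ((hψ.symm _ _).trans _ _ _ hψ') (hψe.trans hψ'e.symm) (hψe ▸ hx))

variable {A B : Set (V × V)} {S : Set E} {e : E}

theorem ncard_eAdj_vBlocks_le_one {X : Set (E → Four)} (hX : IsVBlock src tgt A B S e X) :
    {Y | IsVBlock src tgt A B S e Y ∧ Y ≠ X ∧ EAdj e X Y}.ncard ≤ 1 := by
  obtain ⟨φ, b, -, rfl, -⟩ := hX
  refine (((flipClasses_subsingleton src tgt e φ (oneWayFour_ne_two b)).image
    fun D => {χ ∈ D | χ e = flipFour (oneWayFour b)}).anti ?_).ncard_le_one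
  rintro _ ⟨⟨φ', b', hφ', rfl, -⟩, -, ψ, ⟨hψ, hψe⟩, hflip, hflipe⟩
  refine ⟨_, hψe ▸ mem_flipClasses ⟨φ', hφ', rfl⟩ hψ hflip, ?_⟩
  rw [← hflipe, Function.update_self, hψe]

theorem ncard_eAdj_vClasses_le_one {C : Set (E → Four)} (hC : IsVClass src tgt A B S C)
    (hac : ∀ ψ ∈ C, EAcyclicIn src tgt A B e ψ) :
    {C' | IsVClass src tgt A B S C' ∧ EAdj e C C'}.ncard ≤ 1 := by
  obtain ⟨φ, -, rfl⟩ := hC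
  have hφ : φ e ≠ Four.two := by
    rcases hac φ (.refl φ) with ⟨h, -⟩ | ⟨h, -⟩ <;> simp [h]
  refine ((flipClasses_subsingleton src tgt e φ hφ).anti ?_).ncard_le_one
  rintro C' ⟨hC', ψ, hψ, hflip⟩
  exact apply_eq_of_forall_eAcyclicIn A B hac hψ ▸ mem_flipClasses hC' hψ hflip

theorem ncard_eAdj_vClasses_le_two {C : Set (E → Four)} (hC : IsVClass src tgt A B S C)
    (hcyc : ∀ ψ ∈ C, ECyclicIn src tgt A B e ψ) :
    {C' | IsVClass src tgt A B S C' ∧ EAdj e C C'}.ncard ≤ 2 := by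
  obtain ⟨φ, -, rfl⟩ := hC
  have hφ : φ e ≠ Four.two := by
    rcases hcyc φ (.refl φ) with ⟨h, -⟩ | ⟨h, -⟩ <;> simp [h]
  have hsame := flipClasses_subsingleton src tgt e φ hφ
  have hflipped := flipClasses_subsingleton src tgt e φ (flipFour_ne_two hφ)
  have hsub : {C' | IsVClass src tgt A B S C' ∧ EAdj e (cycCls src tgt φ) C'} ⊆
      flipClasses src tgt e (cycCls src tgt φ) (φ e) ∪
        flipClasses src tgt e (cycCls src tgt φ) (flipFour (φ e)) := by
    rintro C' ⟨hC', ψ, hψ, hflip⟩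
    rcases apply_eq_or_of_mem_cycCls hψ e with h | h
    · exact .inl (h ▸ mem_flipClasses hC' hψ hflip)
    · exact .inr (h ▸ mem_flipClasses hC' hψ hflip)
  calc _ ≤ _ := Set.ncard_le_ncard hsub (hsame.finite.union hflipped.finite)
    _ ≤ _ := Set.ncard_union_le _ _
    _ ≤ 1 + 1 := add_le_add hsame.ncard_le_one hflipped.ncard_le_one

end Classes

theorem statement19_general {V E : Type*} [Fintype E] [DecidableEq E] (src tgt : E → V)
    (A B : Set (V × V)) (S : Set E) (e : E) :
    (∀ X, IsVBlock src tgt A B S e X →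
      {Y | IsVBlock src tgt A B S e Y ∧ Y ≠ X ∧ EAdj e X Y}.ncard ≤ 1) ∧
    (∀ C, IsVClass src tgt A B S C → (∀ ψ ∈ C, EAcyclicIn src tgt A B e ψ) →
      {C' | IsVClass src tgt A B S C' ∧ EAdj e C C'}.ncard ≤ 1) ∧
    (∀ C, IsVClass src tgt A B S C → (∀ ψ ∈ C, ECyclicIn src tgt A B e ψ) →
      {C' | IsVClass src tgt A B S C' ∧ EAdj e C C'}.ncard ≤ 2) :=
  ⟨fun _ => ncard_eAdj_vBlocks_le_one, fun _ => ncard_eAdj_vClasses_le_one,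
    fun _ => ncard_eAdj_vClasses_le_two⟩

/-- Let `𝒱` be the set of `(A,B)`-valid cycle classes with solid edge set
`S` and let `e ∉ S`. Every `𝒱`-block is `e`-adjacent to at most one other `𝒱`-block;
consequently, in the graph on `𝒱` whose edges join `e`-adjacent classes, every `e`-acyclic
class has degree at most 1 and every `e`-cyclic class has degree at most 2. -/
theorem statement19 {V E : Type*} [Fintype V] [Fintype E] [DecidableEq E] (src tgt : E → V)
    (A B : Set (V × V)) (S : Set E) (e : E) (he : e ∉ S) :
    (∀ X, IsVBlock src tgt A B S e X →
      {Y | IsVBlock src tgt A B S e Y ∧ Y ≠ X ∧ EAdj e X Y}.ncard ≤ 1) ∧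
    (∀ C, IsVClass src tgt A B S C → (∀ ψ ∈ C, EAcyclicIn src tgt A B e ψ) →
      {C' | IsVClass src tgt A B S C' ∧ EAdj e C C'}.ncard ≤ 1) ∧
    (∀ C, IsVClass src tgt A B S C → (∀ ψ ∈ C, ECyclicIn src tgt A B e ψ) →
      {C' | IsVClass src tgt A B S C' ∧ EAdj e C C'}.ncard ≤ 2) :=
  statement19_general src tgt A B S e

end SubgraphsVsOrientations
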